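/- (Interior maximum principle for the non-local equation) Let f ∈ C²(ℝ) be bounded with 0 < λ ≤ f ≤ T_M solving f''(y) − c·f'(y) − f(y)⁴ + ∫_ℝ E(y−η)·f(η)⁴ dη = 0 for all y ∈ ℝ, where c > 0. If f attains its supremum or its infimum at some interior point of ℝ, then f is constant. -/

import Mathlib

/-!
At an interior maximum `y₀` of `f` we have `f' y₀ = 0` and `f'' y₀ ≤ 0`, so the equation gives
`f y₀ ^ 4 ≤ ∫ E (y₀ - η) f(η)⁴ dη`. As `E` is a probability density that is positive off `0`,
the nonnegative function `f y₀ ^ 4 - f ^ 4` has zero `E(y₀ - ·)`-average, hence vanishes almost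
everywhere, and everywhere by continuity. Minima are symmetric. The normalisation `∫ E = 1` is
Fubini on `{(x, t) | |x| < t}`: integrating `e^{-t}/t` over `x` first gives `2 e^{-t}`.
-/

open MeasureTheory

/-- The normalized exponential integral kernel E(x) = (1/2)·∫_{|x|}^∞ e^{-t}/t dt. -/
noncomputable def Ek (x : ℝ) : ℝ := (1 / 2) * ∫ t in Set.Ioi |x|, Real.exp (-t) / t

open Real Set Filter Topology

noncomputable def ekIntegrand : ℝ × ℝ → ℝ :=
  {p : ℝ × ℝ | |p.1| < p.2}.indicator fun p => exp (-p.2) / p.2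

lemma ekIntegrand_nonneg (p : ℝ × ℝ) : 0 ≤ ekIntegrand p :=
  indicator_nonneg (fun _ hp => div_nonneg (exp_pos _).le ((abs_nonneg _).trans hp.le)) p

lemma measurable_ekIntegrand : Measurable ekIntegrand :=
  ((measurable_exp.comp measurable_snd.neg).div measurable_snd).indicator
    (measurableSet_lt measurable_fst.abs measurable_snd)

lemma Ek_eq_integral_ekIntegrand (x : ℝ) : Ek x = 2⁻¹ * ∫ t, ekIntegrand (x, t) := by
  rw [Ek, one_div, ← integral_indicator measurableSet_Ioi]
  rfl

lemma ekIntegrand_fiber (t : ℝ) :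
    (fun x => ekIntegrand (x, t)) = (Ioo (-t) t).indicator fun _ => exp (-t) / t := by
  ext x
  simp only [ekIntegrand, indicator, mem_ofPred_eq, mem_Ioo, abs_lt]

lemma integral_ekIntegrand_fiber (t : ℝ) :
    ∫ x, ekIntegrand (x, t) = (Ioi 0).indicator (fun t => 2 * exp (-t)) t := by
  rw [ekIntegrand_fiber, integral_indicator_const _ measurableSet_Ioo, volume_real_Ioo]
  rcases le_or_gt t 0 with ht | ht
  · simp [ht]
  · rw [indicator_of_mem (mem_Ioi.2 ht), smul_eq_mul, max_eq_left (by linarith)]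
    field_simp
    ring

lemma integrable_ekIntegrand : Integrable ekIntegrand (volume.prod volume) := by
  refine (integrable_prod_iff' measurable_ekIntegrand.aestronglyMeasurable).2
    ⟨ae_of_all _ fun t => ?_, ?_⟩
  · rw [ekIntegrand_fiber, integrable_indicator_iff measurableSet_Ioo]
    exact integrableOn_const measure_Ioo_lt_top.ne
  · simp_rw [norm_of_nonneg (ekIntegrand_nonneg _), integral_ekIntegrand_fiber]
    exact (integrable_indicator_iff measurableSet_Ioi).2 ((integrableOn_exp_neg_Ioi 0).const_mul 2)

lemma integrable_Ek : Integrable Ek := by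
  rw [funext Ek_eq_integral_ekIntegrand]
  exact integrable_ekIntegrand.integral_prod_left.const_mul _

lemma integral_Ek : ∫ x, Ek x = 1 := by
  calc ∫ x, Ek x = 2⁻¹ * ∫ x, ∫ t, ekIntegrand (x, t) := by
        simp_rw [Ek_eq_integral_ekIntegrand]; exact integral_const_mul _ _
    _ = 2⁻¹ * ∫ t, ∫ x, ekIntegrand (x, t) := by
        rw [integral_integral_swap (f := fun x t => ekIntegrand (x, t)) integrable_ekIntegrand]
    _ = 1 := by
        simp_rw [integral_ekIntegrand_fiber]
        rw [integral_indicator measurableSet_Ioi, integral_const_mul, integral_exp_neg_Ioi_zero]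
        norm_num

lemma Ek_pos {x : ℝ} (hx : x ≠ 0) : 0 < Ek x := by
  have hx' : 0 < |x| := abs_pos.2 hx
  have hpos : ∀ t ∈ Ioi |x|, 0 < exp (-t) / t := fun t ht => div_pos (exp_pos _) (hx'.trans ht)
  have hint : IntegrableOn (fun t => exp (-t) / t) (Ioi |x|) := by
    refine ((integrableOn_exp_neg_Ioi |x|).div_const |x|).mono' ?_ ?_
    · exact ((measurable_exp.comp measurable_neg).div measurable_id).aestronglyMeasurable
    · refine (ae_restrict_iff' measurableSet_Ioi).2 (ae_of_all _ fun t ht => ?_)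
      rw [norm_of_nonneg (hpos t ht).le]
      exact div_le_div_of_nonneg_left (exp_pos _).le hx' (le_of_lt ht)
  refine mul_pos one_half_pos ((setIntegral_pos_iff_support_of_nonneg_ae ?_ hint).2 ?_)
  · exact (ae_restrict_iff' measurableSet_Ioi).2 (ae_of_all _ fun t ht => (hpos t ht).le)
  · rw [inter_eq_right.2 fun t ht => Function.mem_support.2 (hpos t ht).ne', volume_Ioi]
    exact ENNReal.zero_lt_top

lemma ae_Ek_pos : ∀ᵐ x, 0 < Ek x :=
  (volume.ae_ne 0).mono fun _ => Ek_pos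

section Kernel

variable {K : ℝ → ℝ}

theorem eq_of_forall_le_of_le_integral_comp_sub_mul (hK_pos : ∀ᵐ x, 0 < K x)
    (hK_int : Integrable K) (hK_one : ∫ x, K x = 1) {g : ℝ → ℝ} (hg : Continuous g) {y₀ : ℝ}
    (hgK : Integrable fun η => K (y₀ - η) * g η) (hmax : ∀ z, g z ≤ g y₀)
    (hle : g y₀ ≤ ∫ η, K (y₀ - η) * g η) : ∀ z, g z = g y₀ := by
  have hK_pos' : ∀ᵐ η, 0 < K (y₀ - η) :=
    (quasiMeasurePreserving_sub_left_of_right_invariant volume y₀).ae hK_pos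
  have hKy₀ : Integrable fun η => K (y₀ - η) := (integrable_comp_sub_left K y₀).2 hK_int
  have hdef_int : Integrable fun η => K (y₀ - η) * (g y₀ - g η) := by
    simp only [mul_sub]
    exact (hKy₀.mul_const (g y₀)).sub hgK
  have hdef_nonneg : 0 ≤ᵐ[volume] fun η => K (y₀ - η) * (g y₀ - g η) :=
    hK_pos'.mono fun η hη => mul_nonneg hη.le (sub_nonneg.2 (hmax η))
  have hdef_zero : ∫ η, K (y₀ - η) * (g y₀ - g η) = 0 := by
    refine le_antisymm ?_ (integral_nonneg_of_ae hdef_nonneg)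
    simp_rw [mul_sub]
    rw [integral_sub (hKy₀.mul_const _) hgK, integral_mul_const,
      integral_sub_left_eq_self K volume y₀, hK_one, one_mul]
    linarith
  have hdef_ae := (integral_eq_zero_iff_of_nonneg_ae hdef_nonneg hdef_int).1 hdef_zero
  have hg_ae : g =ᵐ[volume] fun _ => g y₀ := by
    filter_upwards [hdef_ae, hK_pos'] with η hη hKη
    have := (mul_eq_zero.1 hη).resolve_left hKη.ne'
    linarith
  exact congrFun ((hg.ae_eq_iff_eq volume continuous_const).1 hg_ae)

theorem eq_of_forall_ge_of_integral_comp_sub_mul_le (hK_pos : ∀ᵐ x, 0 < K x)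
    (hK_int : Integrable K) (hK_one : ∫ x, K x = 1) {g : ℝ → ℝ} (hg : Continuous g) {y₀ : ℝ}
    (hgK : Integrable fun η => K (y₀ - η) * g η) (hmin : ∀ z, g y₀ ≤ g z)
    (hle : ∫ η, K (y₀ - η) * g η ≤ g y₀) : ∀ z, g z = g y₀ := by
  have := eq_of_forall_le_of_le_integral_comp_sub_mul hK_pos hK_int hK_one hg.neg
    (g := fun η => -g η) (by simpa only [mul_neg] using hgK.fun_neg) (fun z => neg_le_neg (hmin z))
    (by simpa only [mul_neg, integral_neg] using neg_le_neg hle)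
  exact fun z => neg_injective (this z)

end Kernel

theorem IsLocalMax.deriv_deriv_nonpos {f : ℝ → ℝ} {x₀ : ℝ} (h : IsLocalMax f x₀)
    (hc : ContinuousAt f x₀) : deriv (deriv f) x₀ ≤ 0 := by
  by_contra! hpos
  have hmin := isLocalMin_of_deriv_deriv_pos hpos h.deriv_eq_zero hc
  -- Being both a local maximum and a local minimum, `x₀` has `f` locally constant, so `f'' x₀ = 0`.
  have hconst : f =ᶠ[𝓝 x₀] fun _ => f x₀ := by
    filter_upwards [h, hmin] with x hmax hmin
    exact le_antisymm hmax hmin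
  have : deriv (deriv f) x₀ = 0 := by
    rw [hconst.deriv.deriv_eq]
    simp
  linarith

theorem IsLocalMin.deriv_deriv_nonneg {f : ℝ → ℝ} {x₀ : ℝ} (h : IsLocalMin f x₀)
    (hc : ContinuousAt f x₀) : 0 ≤ deriv (deriv f) x₀ := by
  have hneg : deriv (deriv (-f)) x₀ = -deriv (deriv f) x₀ := by
    rw [deriv.neg']
    exact deriv.neg
  have := IsLocalMax.deriv_deriv_nonpos (f := -f) h.neg hc.neg
  linarith

theorem stmt17_general (c T_M lam : ℝ) (hlam : 0 < lam)
    (f : ℝ → ℝ) (hf : ContDiff ℝ 2 f)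
    (hb : ∀ y : ℝ, lam ≤ f y ∧ f y ≤ T_M)
    (heq : ∀ y : ℝ,
      deriv (deriv f) y - c * deriv f y - (f y) ^ 4 +
        (∫ η : ℝ, Ek (y - η) * (f η) ^ 4) = 0)
    (hext : (∃ y₀ : ℝ, ∀ z : ℝ, f z ≤ f y₀) ∨ (∃ y₀ : ℝ, ∀ z : ℝ, f y₀ ≤ f z)) :
    ∀ a b : ℝ, f a = f b := by
  have hpos (y : ℝ) : 0 ≤ f y := hlam.le.trans (hb y).1
  have hcont : Continuous fun y => f y ^ 4 := hf.continuous.pow 4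
  have hint (y : ℝ) : Integrable fun η => Ek (y - η) * f η ^ 4 :=
    ((integrable_comp_sub_left Ek y).2 integrable_Ek).mul_bdd hcont.aestronglyMeasurable
      (ae_of_all _ fun η => by
        rw [norm_of_nonneg (by positivity)]
        exact pow_le_pow_left₀ (hpos η) (hb η).2 4)
  have hkernel (y : ℝ) :
      ∫ η, Ek (y - η) * f η ^ 4 = f y ^ 4 - deriv (deriv f) y + c * deriv f y := by
    linarith [heq y]
  suffices ∃ y₀, ∀ z, f z ^ 4 = f y₀ ^ 4 by
    obtain ⟨y₀, hconst⟩ := this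
    intro a b
    rw [(pow_left_inj₀ (hpos a) (hpos y₀) four_ne_zero).1 (hconst a),
      (pow_left_inj₀ (hpos b) (hpos y₀) four_ne_zero).1 (hconst b)]
  rcases hext with ⟨y₀, hmax⟩ | ⟨y₀, hmin⟩
  · have hloc : IsLocalMax f y₀ := Eventually.of_forall hmax
    refine ⟨y₀, eq_of_forall_le_of_le_integral_comp_sub_mul ae_Ek_pos integrable_Ek integral_Ek
      hcont (hint y₀) (fun z => pow_le_pow_left₀ (hpos z) (hmax z) 4) ?_⟩
    rw [hkernel, hloc.deriv_eq_zero]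
    linarith [hloc.deriv_deriv_nonpos hf.continuous.continuousAt]
  · have hloc : IsLocalMin f y₀ := Eventually.of_forall hmin
    refine ⟨y₀, eq_of_forall_ge_of_integral_comp_sub_mul_le ae_Ek_pos integrable_Ek integral_Ek
      hcont (hint y₀) (fun z => pow_le_pow_left₀ (hpos y₀) (hmin z) 4) ?_⟩
    rw [hkernel, hloc.deriv_eq_zero]
    linarith [hloc.deriv_deriv_nonneg hf.continuous.continuousAt]

/-- interior maximum principle: a bounded solution of the non-local
equation on ℝ that attains its supremum or infimum at an interior point is constant. -/
theorem stmt17 (c T_M lam : ℝ) (hc : 0 < c) (hlam : 0 < lam) (hlT : lam ≤ T_M)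
    (f : ℝ → ℝ) (hf : ContDiff ℝ 2 f)
    (hb : ∀ y : ℝ, lam ≤ f y ∧ f y ≤ T_M)
    (heq : ∀ y : ℝ,
      deriv (deriv f) y - c * deriv f y - (f y) ^ 4 +
        (∫ η : ℝ, Ek (y - η) * (f η) ^ 4) = 0)
    (hext : (∃ y₀ : ℝ, ∀ z : ℝ, f z ≤ f y₀) ∨ (∃ y₀ : ℝ, ∀ z : ℝ, f y₀ ≤ f z)) :
    ∀ a b : ℝ, f a = f b :=
  stmt17_general c T_M lam hlam f hf hb heq hext
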